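/- Let T₀, T₁ and S be monads on the category Type u of sets and let φ : T₀ → T₁ be a monad morphism each of whose components φ_X : T₀ X → T₁ X is surjective. If the forgetful functor from TAlg(T₀,S) to Type u has a left adjoint (i.e., the tensor T₀ ⊗ S exists), then the forgetful functor from TAlg(T₁,S) to Type u has a left adjoint (i.e., the tensor T₁ ⊗ S exists). -/

import Mathlib

open CategoryTheory

universe u

/-- A `(T,S)`-tensor algebra: a set with Eilenberg–Moore algebra structures for both
monads, satisfying the tensor law. -/
structure TensorAlg (T S : Monad (Type u)) where
  carrier : Type u
  α : T.obj carrier → carrier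
  β : S.obj carrier → carrier
  α_unit : ∀ x : carrier, α (T.η.app carrier x) = x
  α_mul : ∀ m : T.obj (T.obj carrier), α (T.μ.app carrier m) = α (T.map (TypeCat.ofHom α) m)
  β_unit : ∀ x : carrier, β (S.η.app carrier x) = x
  β_mul : ∀ m : S.obj (S.obj carrier), β (S.μ.app carrier m) = β (S.map (TypeCat.ofHom β) m)
  tensor_law : ∀ {Y Z : Type u} (p : T.obj Y) (q : S.obj Z) (f : Y × Z → carrier),
    α (T.map (TypeCat.ofHom (fun y => β (S.map (TypeCat.ofHom (fun z => f (y, z))) q))) p) =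
      β (S.map (TypeCat.ofHom (fun z => α (T.map (TypeCat.ofHom (fun y => f (y, z))) p))) q)

/-- Morphisms of tensor algebras: maps homomorphic for both structures. -/
@[ext]
structure TensorAlgHom {T S : Monad (Type u)} (A B : TensorAlg T S) where
  toFun : A.carrier → B.carrier
  map_α : ∀ m : T.obj A.carrier, toFun (A.α m) = B.α (T.map (TypeCat.ofHom toFun) m)
  map_β : ∀ m : S.obj A.carrier, toFun (A.β m) = B.β (S.map (TypeCat.ofHom toFun) m)

instance TensorAlg.instCategory {T S : Monad (Type u)} : Category (TensorAlg T S) where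
  Hom A B := TensorAlgHom A B
  id A :=
    { toFun := id
      map_α := fun m => by
        show A.α m = A.α (T.map (TypeCat.ofHom id) m)
        rw [show TypeCat.ofHom (id : A.carrier → A.carrier) = 𝟙 A.carrier from rfl,
          CategoryTheory.Functor.map_id]
        rfl
      map_β := fun m => by
        show A.β m = A.β (S.map (TypeCat.ofHom id) m)
        rw [show TypeCat.ofHom (id : A.carrier → A.carrier) = 𝟙 A.carrier from rfl,
          CategoryTheory.Functor.map_id]
        rfl }
  comp {A B C} f g :=
    { toFun := g.toFun ∘ f.toFun
      map_α := fun m => by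
        show g.toFun (f.toFun (A.α m)) = C.α (T.map (TypeCat.ofHom (g.toFun ∘ f.toFun)) m)
        rw [f.map_α, g.map_α]
        congr 1
        rw [show TypeCat.ofHom (g.toFun ∘ f.toFun) =
          TypeCat.ofHom f.toFun ≫ TypeCat.ofHom g.toFun from rfl, CategoryTheory.Functor.map_comp]
        rfl
      map_β := fun m => by
        show g.toFun (f.toFun (A.β m)) = C.β (S.map (TypeCat.ofHom (g.toFun ∘ f.toFun)) m)
        rw [f.map_β, g.map_β]
        congr 1
        rw [show TypeCat.ofHom (g.toFun ∘ f.toFun) =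
          TypeCat.ofHom f.toFun ≫ TypeCat.ofHom g.toFun from rfl, CategoryTheory.Functor.map_comp]
        rfl }
  id_comp f := by apply TensorAlgHom.ext; rfl
  comp_id f := by apply TensorAlgHom.ext; rfl
  assoc f g h := by apply TensorAlgHom.ext; rfl

/-- The forgetful functor from `(T,S)`-tensor algebras to sets. -/
def forgetTAlg (T S : Monad (Type u)) : TensorAlg T S ⥤ Type u where
  obj A := A.carrier
  map f := TypeCat.ofHom (TensorAlgHom.toFun f)
  map_id _ := rfl
  map_comp _ _ := rfl

/-!
Because `φ` is componentwise surjective, restriction along `φ` makes `(T₁,S)`-tensor algebras a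
full subcategory of `(T₀,S)`-tensor algebras that is closed under products and under images of
`T₀`-homomorphisms: the image is closed under the `T₁`-structure because every element of `T₁ X`
comes from `T₀ X`. Such a subcategory is reflective, the reflection of `A` being the image of `A` in
the product of one algebra for each kernel of a `T₀`-homomorphism out of `A`. Composing the free
`(T₀,S)`-tensor algebra functor with this reflection gives the free `(T₁,S)`-tensor algebra.
-/

namespace CategoryTheory

variable {X Y Z : Type u}

lemma Functor.map_map_apply (F : Type u ⥤ Type u) (f : X ⟶ Y) (g : Y ⟶ Z) (x : F.obj X) :
    F.map g (F.map f x) = F.map (TypeCat.ofHom fun a => g (f a)) x :=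
  (F.map_comp_apply f g x).symm

lemma Functor.map_surjective_of_surjective (F : Type u ⥤ Type u) {f : X ⟶ Y}
    (hf : Function.Surjective f) : Function.Surjective (F.map f) := by
  rw [← epi_iff_surjective] at hf ⊢
  have := isSplitEpi_of_epi f
  infer_instance

lemma Monad.map_η_app_apply (T : Monad (Type u)) (f : X ⟶ Y) (x : X) :
    T.map f (T.η.app X x) = T.η.app Y (f x) :=
  (T.η.naturality_apply f x).symm

lemma Monad.map_μ_app_apply (T : Monad (Type u)) (f : X ⟶ Y) (m : T.obj (T.obj X)) :
    T.map f (T.μ.app X m) = T.μ.app Y (T.map (T.map f) m) :=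
  (T.μ.naturality_apply f m).symm

variable {T₀ T₁ : Monad (Type u)} (φ : T₀ ⟶ T₁)

lemma MonadHom.app_map_apply (f : X ⟶ Y) (m : T₀.obj X) :
    φ.app Y (T₀.map f m) = T₁.map f (φ.app X m) :=
  φ.naturality_apply f m

lemma MonadHom.app_η_apply (x : X) : φ.app X (T₀.η.app X x) = T₁.η.app X x :=
  ConcreteCategory.congr_hom (φ.app_η X) x

lemma MonadHom.app_μ_apply (m : T₀.obj (T₀.obj X)) :
    φ.app X (T₀.μ.app X m) = T₁.μ.app X (φ.app (T₁.obj X) (T₀.map (φ.app X) m)) :=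
  ConcreteCategory.congr_hom (φ.app_μ X) m

end CategoryTheory

namespace TensorAlg

variable {T T₀ T₁ S : Monad (Type u)}

abbrev restrict (φ : T₀ ⟶ T₁) (B : TensorAlg T₁ S) : TensorAlg T₀ S where
  carrier := B.carrier
  α m := B.α (φ.app _ m)
  β := B.β
  α_unit x := by rw [MonadHom.app_η_apply, B.α_unit]
  α_mul m := by
    rw [MonadHom.app_μ_apply, B.α_mul, ← MonadHom.app_map_apply, Functor.map_map_apply]
  β_unit := B.β_unit
  β_mul := B.β_mul
  tensor_law p q f := by
    simp only [MonadHom.app_map_apply]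
    exact B.tensor_law (φ.app _ p) q f

lemma restrict_α (φ : T₀ ⟶ T₁) (B : TensorAlg T₁ S) (m : T₀.obj B.carrier) :
    (B.restrict φ).α m = B.α (φ.app _ m) :=
  rfl

def restrictFunctor (φ : T₀ ⟶ T₁) : TensorAlg T₁ S ⥤ TensorAlg T₀ S where
  obj := restrict φ
  map {B C} g :=
    { toFun := g.toFun
      map_α m := (g.map_α _).trans (congrArg C.α (φ.app_map_apply _ m).symm)
      map_β := g.map_β }

abbrev pi {I : Type u} (B : I → TensorAlg T S) : TensorAlg T S where
  carrier := ∀ i, (B i).carrier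
  α m i := (B i).α (T.map (TypeCat.ofHom fun v => v i) m)
  β m i := (B i).β (S.map (TypeCat.ofHom fun v => v i) m)
  α_unit x := by
    funext i
    simp only [Monad.map_η_app_apply]
    exact (B i).α_unit (x i)
  α_mul m := by
    funext i
    simp only [Monad.map_μ_app_apply, (B i).α_mul, Functor.map_map_apply]
  β_unit x := by
    funext i
    simp only [Monad.map_η_app_apply]
    exact (B i).β_unit (x i)
  β_mul m := by
    funext i
    simp only [Monad.map_μ_app_apply, (B i).β_mul, Functor.map_map_apply]
  tensor_law p q f := by
    funext i
    simp only [Functor.map_map_apply]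
    exact (B i).tensor_law p q fun yz => f yz i

def piLift {I : Type u} {φ : T₀ ⟶ T₁} {A : TensorAlg T₀ S} {B : I → TensorAlg T₁ S}
    (f : ∀ i, A ⟶ (B i).restrict φ) : A ⟶ (pi B).restrict φ where
  toFun a i := (f i).toFun a
  map_α m := by
    funext i
    change (f i).toFun (A.α m) = (B i).α _
    rw [(f i).map_α, ← MonadHom.app_map_apply, Functor.map_map_apply]
  map_β m := by
    funext i
    change (f i).toFun (A.β m) = (B i).β _
    rw [(f i).map_β, Functor.map_map_apply]

abbrev subalgebra (B : TensorAlg T S) (s : Set B.carrier)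
    (hα : ∀ m : T.obj s, B.α (T.map (TypeCat.ofHom Subtype.val) m) ∈ s)
    (hβ : ∀ m : S.obj s, B.β (S.map (TypeCat.ofHom Subtype.val) m) ∈ s) : TensorAlg T S where
  carrier := s
  α m := ⟨_, hα m⟩
  β m := ⟨_, hβ m⟩
  α_unit x := Subtype.ext <| by
    simp only [Monad.map_η_app_apply]
    exact B.α_unit x
  α_mul m := Subtype.ext <| by
    simp only [Monad.map_μ_app_apply, B.α_mul, Functor.map_map_apply]
  β_unit x := Subtype.ext <| by
    simp only [Monad.map_η_app_apply]
    exact B.β_unit x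
  β_mul m := Subtype.ext <| by
    simp only [Monad.map_μ_app_apply, B.β_mul, Functor.map_map_apply]
  tensor_law p q f := Subtype.ext <| by
    simp only [Functor.map_map_apply]
    exact B.tensor_law p q fun yz => (f yz).val

section Range

variable {φ : T₀ ⟶ T₁} {A : TensorAlg T₀ S} {B : TensorAlg T₁ S} (f : A ⟶ B.restrict φ)

lemma α_map_val_mem_range (hφ : ∀ X, Function.Surjective (φ.app X))
    (m : T₁.obj (Set.range f.toFun)) :
    B.α (T₁.map (TypeCat.ofHom Subtype.val) m) ∈ Set.range f.toFun := by
  obtain ⟨m₁, rfl⟩ := T₁.map_surjective_of_surjective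
    (f := TypeCat.ofHom (Set.rangeFactorization f.toFun)) Set.rangeFactorization_surjective m
  obtain ⟨m₀, rfl⟩ := hφ _ m₁
  refine ⟨A.α m₀, ?_⟩
  rw [f.map_α, Functor.map_map_apply]
  exact congrArg B.α (φ.app_map_apply _ m₀)

lemma β_map_val_mem_range (m : S.obj (Set.range f.toFun)) :
    B.β (S.map (TypeCat.ofHom Subtype.val) m) ∈ Set.range f.toFun := by
  obtain ⟨m₀, rfl⟩ := S.map_surjective_of_surjective
    (f := TypeCat.ofHom (Set.rangeFactorization f.toFun)) Set.rangeFactorization_surjective m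
  refine ⟨A.β m₀, ?_⟩
  rw [f.map_β, Functor.map_map_apply]
  rfl

abbrev range (hφ : ∀ X, Function.Surjective (φ.app X)) : TensorAlg T₁ S :=
  B.subalgebra (Set.range f.toFun) (α_map_val_mem_range f hφ) (β_map_val_mem_range f)

def rangeFactorization (hφ : ∀ X, Function.Surjective (φ.app X)) :
    A ⟶ (range f hφ).restrict φ where
  toFun := Set.rangeFactorization f.toFun
  map_α m := Subtype.ext <| by
    change f.toFun (A.α m) = B.α (T₁.map _ (φ.app _ _))
    rw [f.map_α, ← MonadHom.app_map_apply, Functor.map_map_apply]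
    rfl
  map_β m := Subtype.ext <| by
    change f.toFun (A.β m) = B.β (S.map _ (S.map _ _))
    rw [f.map_β, Functor.map_map_apply]
    rfl

end Range

section Descent

variable {φ : T₀ ⟶ T₁} {A : TensorAlg T₀ S} {B C : TensorAlg T₁ S}
  {p : A ⟶ C.restrict φ} {f : A ⟶ B.restrict φ}

lemma map_α_of_comp_eq (hp : Function.Surjective p.toFun)
    (hφ : ∀ X, Function.Surjective (φ.app X)) {g : C.carrier → B.carrier}
    (hg : ∀ a, g (p.toFun a) = f.toFun a) (m : T₁.obj C.carrier) :
    g (C.α m) = B.α (T₁.map (TypeCat.ofHom g) m) := by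
  obtain ⟨m₁, rfl⟩ := T₁.map_surjective_of_surjective (f := TypeCat.ofHom p.toFun) hp m
  obtain ⟨m₀, rfl⟩ := hφ _ m₁
  calc g (C.α (T₁.map (TypeCat.ofHom p.toFun) (φ.app _ m₀)))
      = f.toFun (A.α m₀) := by rw [← MonadHom.app_map_apply, ← hg, p.map_α]
    _ = B.α (T₁.map (TypeCat.ofHom g) (T₁.map (TypeCat.ofHom p.toFun) (φ.app _ m₀))) := by
      rw [f.map_α, restrict_α, MonadHom.app_map_apply, Functor.map_map_apply]
      simp only [TypeCat.ofHom_apply, hg]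

lemma map_β_of_comp_eq (hp : Function.Surjective p.toFun) {g : C.carrier → B.carrier}
    (hg : ∀ a, g (p.toFun a) = f.toFun a) (m : S.obj C.carrier) :
    g (C.β m) = B.β (S.map (TypeCat.ofHom g) m) := by
  obtain ⟨m₀, rfl⟩ := S.map_surjective_of_surjective (f := TypeCat.ofHom p.toFun) hp m
  calc g (C.β (S.map (TypeCat.ofHom p.toFun) m₀))
      = f.toFun (A.β m₀) := by rw [← hg, p.map_β]
    _ = B.β (S.map (TypeCat.ofHom g) (S.map (TypeCat.ofHom p.toFun) m₀)) := by
      rw [f.map_β, Functor.map_map_apply]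
      simp only [TypeCat.ofHom_apply, hg]

lemma surjInv_comp_eq (hp : Function.Surjective p.toFun)
    (hf : ∀ a a', p.toFun a = p.toFun a' → f.toFun a = f.toFun a')
    (a : A.carrier) : f.toFun (Function.surjInv hp (p.toFun a)) = f.toFun a :=
  hf _ _ (Function.surjInv_eq hp _)

noncomputable def descend (hp : Function.Surjective p.toFun)
    (hφ : ∀ X, Function.Surjective (φ.app X))
    (hf : ∀ a a', p.toFun a = p.toFun a' → f.toFun a = f.toFun a') : C ⟶ B where
  toFun := f.toFun ∘ Function.surjInv hp
  map_α := map_α_of_comp_eq hp hφ (surjInv_comp_eq hp hf)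
  map_β := map_β_of_comp_eq hp (surjInv_comp_eq hp hf)

lemma descend_comp (hp : Function.Surjective p.toFun) (hφ : ∀ X, Function.Surjective (φ.app X))
    (hf : ∀ a a', p.toFun a = p.toFun a' → f.toFun a = f.toFun a') :
    p ≫ (restrictFunctor φ).map (descend hp hφ hf) = f :=
  TensorAlgHom.ext (funext (surjInv_comp_eq hp hf))

lemma hom_ext_of_surjective (hp : Function.Surjective p.toFun) {g₁ g₂ : C ⟶ B}
    (h : p ≫ (restrictFunctor φ).map g₁ = p ≫ (restrictFunctor φ).map g₂) : g₁ = g₂ :=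
  TensorAlgHom.ext (hp.injective_comp_right (congrArg TensorAlgHom.toFun h))

end Descent

section Reflection

variable (φ : T₀ ⟶ T₁) (hφ : ∀ X, Function.Surjective (φ.app X)) (A : TensorAlg T₀ S)

/-- These kernels form a set, so choosing one algebra per kernel (`kernelAlg`) gives a small
family of `(T₁,S)`-algebras that still detects every `T₀`-homomorphism out of `A`. -/
def restrictKernels : Set (Setoid A.carrier) :=
  {r | ∃ (B : TensorAlg T₁ S) (f : A ⟶ B.restrict φ), Setoid.ker f.toFun = r}

noncomputable def kernelAlg (r : restrictKernels φ A) : TensorAlg T₁ S :=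
  r.2.choose

noncomputable def kernelHom (r : restrictKernels φ A) : A ⟶ (kernelAlg φ A r).restrict φ :=
  r.2.choose_spec.choose

lemma ker_kernelHom (r : restrictKernels φ A) : Setoid.ker (kernelHom φ A r).toFun = r :=
  r.2.choose_spec.choose_spec

noncomputable def reflect : TensorAlg T₁ S :=
  range (piLift (kernelHom φ A)) hφ

noncomputable def toReflect : A ⟶ (reflect φ hφ A).restrict φ :=
  rangeFactorization _ hφ

lemma toReflect_surjective : Function.Surjective (toReflect φ hφ A).toFun :=
  Set.rangeFactorization_surjective

variable {φ hφ A} in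
lemma apply_eq_of_toReflect_eq {B : TensorAlg T₁ S} (f : A ⟶ B.restrict φ) {a a' : A.carrier}
    (h : (toReflect φ hφ A).toFun a = (toReflect φ hφ A).toFun a') : f.toFun a = f.toFun a' := by
  let r : restrictKernels φ A := ⟨Setoid.ker f.toFun, B, f, rfl⟩
  have hr : (kernelHom φ A r).toFun a = (kernelHom φ A r).toFun a' :=
    congrFun (congrArg Subtype.val h) r
  rwa [← Setoid.ker_def, ker_kernelHom] at hr

noncomputable def reflectHomEquiv (B : TensorAlg T₁ S) :
    (reflect φ hφ A ⟶ B) ≃ (A ⟶ B.restrict φ) where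
  toFun g := toReflect φ hφ A ≫ (restrictFunctor φ).map g
  invFun f := descend (toReflect_surjective φ hφ A) hφ fun _ _ => apply_eq_of_toReflect_eq f
  left_inv _ := hom_ext_of_surjective (toReflect_surjective φ hφ A) (descend_comp ..)
  right_inv _ := descend_comp ..

noncomputable def reflector : TensorAlg T₀ S ⥤ TensorAlg T₁ S :=
  Adjunction.leftAdjointOfEquiv (G := restrictFunctor φ) (reflectHomEquiv φ hφ)
    fun _ _ _ _ _ => rfl

noncomputable def reflectorAdjunction : reflector φ hφ ⊣ restrictFunctor (S := S) φ :=
  Adjunction.adjunctionOfEquivLeft _ _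

end Reflection

end TensorAlg

/-- Proposition 3.7(1): if `T₀ ⊗ S` exists and `φ : T₀ → T₁` is a componentwise
surjective monad morphism, then `T₁ ⊗ S` exists. -/
theorem tensor_exists_of_surjective_monadHom (T₀ T₁ S : Monad (Type u)) (φ : T₀ ⟶ T₁)
    (hsurj : ∀ X : Type u, Function.Surjective (φ.app X))
    (h : ∃ F : Type u ⥤ TensorAlg T₀ S, Nonempty (F ⊣ forgetTAlg T₀ S)) :
    ∃ F : Type u ⥤ TensorAlg T₁ S, Nonempty (F ⊣ forgetTAlg T₁ S) := by
  obtain ⟨F₀, ⟨adj₀⟩⟩ := h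
  -- `restrictFunctor φ ⋙ forgetTAlg T₀ S` is `forgetTAlg T₁ S` by definition.
  exact ⟨F₀ ⋙ TensorAlg.reflector φ hsurj, ⟨adj₀.comp (TensorAlg.reflectorAdjunction φ hsurj)⟩⟩
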